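/- Let θ₀ = (1+√5)/2 be the golden ratio, let β be a Perron number that is neither a Pisot number nor a Salem number, and let γ ≠ β be a Galois conjugate of β with |γ| > 1. Then for every integer k with k ≥ log(θ₀)/log(|γ|) (equivalently, every k ≥ ⌈log(θ₀)/log(|γ|)⌉), the power β^k is not a Parry number. -/

import Mathlib

/-!
Let `x n = T_b^[n] 1` and `d n = ⌊b * x n⌋`, so that `x (n + 1) = b * x n - d n`. Running the same
recursion with `b` replaced by a conjugate `g` gives a sequence `y`; since `x n` and `y n` are the
same rational polynomial evaluated at `b` and at `g`, `y n` is determined by `x n`, so `y` is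
bounded when `b` is Parry. Telescoping then shows that `F z = ∑ x n * z ^ n` vanishes at
`z = g⁻¹` whenever `g ≠ b` and `1 < ‖g‖`. On the other hand `x 0 = 1`, `x n ∈ [0, 1]` and
`x 1 < 1` force `0 < Re F z` for `‖z‖ ≤ φ⁻¹`, by comparing `Re F` with geometric series.
Hence every conjugate `g ≠ b` of a Parry number `b` has `‖g‖ < φ` (Solomyak). If
`k ≥ log φ / log ‖γ‖` then `φ ≤ ‖γ ^ k‖`, and `γ ^ k ≠ β ^ k` is a conjugate of `β ^ k`
because `β` is Perron.
-/

/-- The β-transformation `x ↦ βx - ⌊βx⌋`. -/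
noncomputable def betaT (β : ℝ) (x : ℝ) : ℝ := β * x - ⌊β * x⌋

/-- `β` is a Parry number: `β > 1` and the forward orbit of `1` under the
β-transformation is finite. -/
def IsParry (β : ℝ) : Prop :=
  1 < β ∧ Set.Finite {x : ℝ | ∃ n : ℕ, 1 ≤ n ∧ (betaT β)^[n] 1 = x}

/-- `β` is a simple Parry number: Parry, and the orbit of `1` hits `0`. -/
def IsSimpleParry (β : ℝ) : Prop :=
  IsParry β ∧ ∃ n : ℕ, 1 ≤ n ∧ (betaT β)^[n] 1 = 0

/-- `β` is a Perron number: a real algebraic integer `β > 1` all of whose Galois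
conjugates other than `β` itself have complex absolute value `< β`. -/
def IsPerron (β : ℝ) : Prop :=
  1 < β ∧ IsIntegral ℤ β ∧
    ∀ z : ℂ, Polynomial.aeval z (minpoly ℚ β) = 0 → z ≠ (β : ℂ) → ‖z‖ < β

/-- `β` is a Pisot number. -/
def IsPisot (β : ℝ) : Prop :=
  1 < β ∧ IsIntegral ℤ β ∧
    ∀ z : ℂ, Polynomial.aeval z (minpoly ℚ β) = 0 → z ≠ (β : ℂ) → ‖z‖ < 1

/-- `β` is a Salem number. -/
def IsSalem (β : ℝ) : Prop :=
  1 < β ∧ IsIntegral ℤ β ∧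
    (∀ z : ℂ, Polynomial.aeval z (minpoly ℚ β) = 0 → z ≠ (β : ℂ) → ‖z‖ ≤ 1) ∧
    (∃ z : ℂ, Polynomial.aeval z (minpoly ℚ β) = 0 ∧ ‖z‖ = 1)

/-- `β` has Parry order exactly `n`: if `n ≥ 1` then `β ^ n` is Parry, and no higher
power of `β` is Parry. -/
def HasParryOrder (β : ℝ) (n : ℕ) : Prop :=
  (1 ≤ n → IsParry (β ^ n)) ∧ ∀ k : ℕ, n < k → ¬ IsParry (β ^ k)

/-- Mahler measure of an algebraic number `β`: product of `max 1 |α|` over the complex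
roots `α` of the minimal polynomial of `β` over `ℚ`. -/
noncomputable def mahlerMeasureOf (β : ℝ) : ℝ :=
  (((minpoly ℚ β).map (algebraMap ℚ ℂ)).roots.map (fun z => max 1 (‖z‖))).prod

open Polynomial Filter Topology Real goldenRatio

theorem Function.FactorsThrough.finite_range {ι α β : Type*} {x : ι → α} {y : ι → β}
    (h : y.FactorsThrough x) (hx : (Set.range x).Finite) : (Set.range y).Finite := by
  have hxy : (Set.range fun i => (x i, y i)).Finite := by
    refine Set.Finite.of_finite_image (f := Prod.fst) (by rwa [← Set.range_comp]) ?_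
    rintro _ ⟨i, rfl⟩ _ ⟨j, rfl⟩ hij
    exact Prod.ext hij (h hij)
  convert hxy.image Prod.snd
  rw [← Set.range_comp]
  rfl

theorem aeval_eq_zero_of_aeval_minpoly_eq_zero {K A B : Type*} [Field K] [Ring A] [Algebra K A]
    [CommRing B] [Algebra K B] {b : A} {g : B} (hg : aeval g (minpoly K b) = 0) {p : K[X]}
    (hp : aeval b p = 0) : aeval g p = 0 := by
  obtain ⟨q, rfl⟩ := minpoly.dvd K b hp
  rw [map_mul, hg, zero_mul]

theorem aeval_pow_minpoly_pow {K A B : Type*} [Field K] [CommRing A] [Algebra K A]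
    [CommRing B] [Algebra K B] {b : A} {g : B} (hg : aeval g (minpoly K b) = 0) (k : ℕ) :
    aeval (g ^ k) (minpoly K (b ^ k)) = 0 := by
  have := aeval_eq_zero_of_aeval_minpoly_eq_zero hg
    (p := (minpoly K (b ^ k)).comp (X ^ k)) (by simp [aeval_comp])
  simpa [aeval_comp] using this

theorem Complex.re_inv_one_sub (z : ℂ) :
    (1 - z)⁻¹.re = (1 - z.re) / (1 - 2 * z.re + ‖z‖ ^ 2) := by
  rw [Complex.inv_re, Complex.normSq_apply, Complex.sq_norm, Complex.normSq_apply]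
  simp only [Complex.sub_re, Complex.one_re, Complex.sub_im, Complex.one_im]
  ring_nf

/-- With `a = Re z`, `t = ‖z‖` and `s = x 1`, this is the lower bound for `Re ∑ x n * z ^ n`
obtained below. It tends to `0` as `s → 1` at `z = -φ⁻¹`, which is why `s < 1` is needed. -/
theorem solomyak_bound_pos {a t s : ℝ} (ht : t ^ 2 + t ≤ 1) (hat : |a| ≤ t) (hs0 : 0 ≤ s)
    (hs1 : s < 1) :
    0 < 1 + (s * a - (a - t) / 2) + ((1 - a) / (1 - 2 * a + t ^ 2) - (1 - t)⁻¹) / 2 := by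
  obtain ⟨hat₁, hat₂⟩ := abs_le.mp hat
  have ht0 : 0 ≤ t := by linarith
  have ht1 : 0 < 1 - t := by nlinarith
  have hN : 0 < 1 - 2 * a + t ^ 2 := by nlinarith
  have hP : 0 ≤ s * a - (a - t) / 2 := by nlinarith
  have hNM : 0 < 2 * (1 - 2 * a + t ^ 2) * (1 - t) := by positivity
  suffices 0 < 2 * (1 - 2 * a + t ^ 2) * (1 - t) * (s * a - (a - t) / 2)
      + ((1 - 2 * a + t ^ 2) * (1 - 2 * t) + (1 - a) * (1 - t)) by
    have hN₀ := hN.ne'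
    have ht₀ : t - 1 ≠ 0 := by linarith
    calc (0 : ℝ) < _ := div_pos this hNM
      _ = _ := by field_simp; ring
  rcases hat₁.eq_or_lt with rfl | hat₁
  · rcases ht0.eq_or_lt with rfl | ht0
    · norm_num
    · nlinarith [mul_pos hNM (mul_pos ht0 (sub_pos.2 hs1))]
  · nlinarith [mul_nonneg (sub_nonneg.2 hat₂) (sub_nonneg.2 ht),
      mul_nonneg (neg_le_iff_add_nonneg.1 hat₁.le) (sub_nonneg.2 ht),
      mul_pos (neg_lt_iff_pos_add.1 hat₁) (pow_pos ht1 2), mul_nonneg hNM.le hP]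

theorem re_tsum_ofReal_mul_pow_pos {x : ℕ → ℝ} (hx0 : x 0 = 1) (hx1 : x 1 < 1)
    (hx : ∀ n, x n ∈ Set.Icc 0 1) {z : ℂ} (hz : ‖z‖ ≤ φ⁻¹) :
    0 < (∑' n, (x n : ℂ) * z ^ n).re := by
  set t := ‖z‖
  have ht1 : t < 1 := hz.trans_lt (inv_lt_one_of_one_lt₀ one_lt_goldenRatio)
  have ht : t ^ 2 + t ≤ 1 := by
    rw [inv_goldenRatio, ← one_sub_goldenConj] at hz
    nlinarith [norm_nonneg z, goldenRatio_sq]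
  have hsum : Summable fun n => (x n : ℂ) * z ^ n := by
    refine Summable.of_norm_bounded (summable_geometric_of_lt_one (norm_nonneg z) ht1) fun n => ?_
    rw [norm_mul, norm_pow, Complex.norm_real, Real.norm_eq_abs, abs_of_nonneg (hx n).1]
    exact mul_le_of_le_one_left (by positivity) (hx n).2
  have hgeom : HasSum (fun n => (z ^ n).re - t ^ n) ((1 - z)⁻¹.re - (1 - t)⁻¹) :=
    (Complex.hasSum_re (hasSum_geometric_of_norm_lt_one ht1)).sub
      (hasSum_geometric_of_lt_one (norm_nonneg z) ht1)
  -- Since `0 ≤ x n ≤ 1`, each term `x n * Re zⁿ` is at least `(Re zⁿ - tⁿ) / 2`; the excess `u`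
  -- is kept exactly for `n = 0, 1`.
  set u : ℕ → ℝ := fun n => x n * (z ^ n).re - ((z ^ n).re - t ^ n) / 2
  have hu : HasSum u ((∑' n, (x n : ℂ) * z ^ n).re - ((1 - z)⁻¹.re - (1 - t)⁻¹) / 2) := by
    refine (Complex.hasSum_re hsum.hasSum).sub (hgeom.div_const 2) |>.congr_fun fun n => ?_
    simp [u]
  have hu_nonneg (n : ℕ) : 0 ≤ u n := by
    have := abs_le.mp ((Complex.abs_re_le_norm (z ^ n)).trans_eq (norm_pow z n))
    simp only [u]
    nlinarith [(hx n).1, (hx n).2]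
  have hu01 := sum_le_hasSum (Finset.range 2) (fun n _ => hu_nonneg n) hu
  simp only [Finset.sum_range_succ, Finset.sum_range_zero, zero_add, u, hx0, pow_zero, pow_one,
    Complex.one_re, Complex.re_inv_one_sub] at hu01
  linarith [solomyak_bound_pos ht (Complex.abs_re_le_norm z) (hx 1).1 hx1]

/-- `digitRemainder w D n = w ^ n - ∑ i < n, D i * w ^ (n - 1 - i)`. -/
def digitRemainder {A : Type*} [CommRing A] (w : A) (D : ℕ → ℤ) : ℕ → A
  | 0 => 1
  | n + 1 => w * digitRemainder w D n - D n

theorem map_digitRemainder {F A B : Type*} [CommRing A] [CommRing B] [FunLike F A B]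
    [RingHomClass F A B] (f : F) (w : A) (D : ℕ → ℤ) (n : ℕ) :
    f (digitRemainder w D n) = digitRemainder (f w) D n := by
  induction n with
  | zero => simp [digitRemainder]
  | succ n ih => simp [digitRemainder, ih]

/-- Telescoping, with `D i = b * x i - x (i + 1)` for `x = digitRemainder b D`. -/
theorem pow_mul_digitRemainder {A : Type*} [CommRing A] {b g z : A} (hzg : z * g = 1)
    (D : ℕ → ℤ) (N : ℕ) :
    z ^ N * digitRemainder g D N = ∑ i ∈ Finset.range (N + 1), digitRemainder b D i * z ^ i
      - b * z * ∑ i ∈ Finset.range N, digitRemainder b D i * z ^ i := by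
  induction N with
  | zero => simp [digitRemainder]
  | succ N ih =>
    simp only [Finset.sum_range_succ, digitRemainder] at ih ⊢
    linear_combination ih + z ^ N * digitRemainder g D N * hzg

theorem tsum_digitRemainder_eq_zero {b g : ℂ} {D : ℕ → ℤ} (hgb : g ≠ b) (hg : 1 < ‖g‖)
    (hb_bdd : Bornology.IsBounded (Set.range (digitRemainder b D)))
    (hg_bdd : Bornology.IsBounded (Set.range (digitRemainder g D))) :
    ∑' n, digitRemainder b D n * g⁻¹ ^ n = 0 := by
  set z := g⁻¹
  have hzg : z * g = 1 := inv_mul_cancel₀ (norm_pos_iff.mp (one_pos.trans hg))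
  have hz : ‖z‖ < 1 := by rw [norm_inv]; exact inv_lt_one_of_one_lt₀ hg
  obtain ⟨C, hC⟩ := isBounded_iff_forall_norm_le.mp hb_bdd
  obtain ⟨C', hC'⟩ := isBounded_iff_forall_norm_le.mp hg_bdd
  have hsum : Summable fun n => digitRemainder b D n * z ^ n := by
    refine Summable.of_norm_bounded ((summable_geometric_of_lt_one (norm_nonneg z) hz).mul_left C)
      fun n => ?_
    rw [norm_mul, norm_pow]
    exact mul_le_mul_of_nonneg_right (hC _ ⟨n, rfl⟩) (by positivity)
  set F := ∑' n, digitRemainder b D n * z ^ n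
  have hlim_zero : Tendsto (fun N => z ^ N * digitRemainder g D N) atTop (𝓝 0) :=
    (tendsto_pow_atTop_nhds_zero_of_norm_lt_one hz).zero_mul_isBoundedUnder_le
      (isBoundedUnder_of ⟨C', fun N => hC' _ ⟨N, rfl⟩⟩)
  have hlim_F : Tendsto (fun N => z ^ N * digitRemainder g D N) atTop (𝓝 (F - b * z * F)) := by
    simp only [pow_mul_digitRemainder (b := b) hzg]
    exact (hsum.hasSum.tendsto_sum_nat.comp (tendsto_add_atTop_nat 1)).sub
      (hsum.hasSum.tendsto_sum_nat.const_mul _)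
  have hbz : 1 - b * z ≠ 0 := by
    intro h
    apply hgb
    linear_combination g * h + b * hzg
  have := tendsto_nhds_unique hlim_F hlim_zero
  exact (mul_eq_zero.mp (by linear_combination this : (1 - b * z) * F = 0)).resolve_left hbz

noncomputable def betaDigit (b : ℝ) (n : ℕ) : ℤ := ⌊b * (betaT b)^[n] 1⌋

theorem betaT_iterate_one_eq_digitRemainder (b : ℝ) (n : ℕ) :
    (betaT b)^[n] 1 = digitRemainder b (betaDigit b) n := by
  induction n with
  | zero => rfl
  | succ n ih =>
    rw [Function.iterate_succ_apply', digitRemainder, ← ih]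
    rfl

theorem betaT_mem_Ico (b x : ℝ) : betaT b x ∈ Set.Ico 0 1 :=
  ⟨Int.fract_nonneg _, Int.fract_lt_one _⟩

theorem betaT_iterate_one_mem_Icc (b : ℝ) (n : ℕ) : (betaT b)^[n] 1 ∈ Set.Icc 0 1 := by
  cases n with
  | zero => simp
  | succ n =>
    rw [Function.iterate_succ_apply']
    exact Set.Ico_subset_Icc_self (betaT_mem_Ico _ _)

theorem IsParry.finite_range_iterate {b : ℝ} (hb : IsParry b) :
    (Set.range fun n => (betaT b)^[n] 1).Finite := by
  refine (hb.2.insert 1).subset ?_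
  rintro _ ⟨n, rfl⟩
  rcases Nat.eq_zero_or_pos n with rfl | hn
  · exact Set.mem_insert _ _
  · exact Set.mem_insert_of_mem _ ⟨n, hn, rfl⟩

theorem IsParry.norm_lt_goldenRatio {b : ℝ} (hb : IsParry b) {g : ℂ}
    (hg : aeval g (minpoly ℚ b) = 0) (hgb : g ≠ b) : ‖g‖ < φ := by
  by_contra! hφ
  set x := digitRemainder b (betaDigit b)
  have hx : (fun n => (betaT b)^[n] 1) = x := funext (betaT_iterate_one_eq_digitRemainder b)
  have hx_mem (n : ℕ) : x n ∈ Set.Icc 0 1 := hx ▸ betaT_iterate_one_mem_Icc b n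
  have hx1 : x 1 < 1 := hx ▸ (betaT_mem_Ico b 1).2
  have hx_fin : (Set.range x).Finite := hx ▸ hb.finite_range_iterate
  have hxC (n : ℕ) : (x n : ℂ) = digitRemainder (b : ℂ) (betaDigit b) n := by
    rw [← Complex.ofRealHom_eq_coe, map_digitRemainder, Complex.ofRealHom_eq_coe]
  have hxC_fin : (Set.range (digitRemainder (b : ℂ) (betaDigit b))).Finite :=
    Function.FactorsThrough.finite_range (fun i j hij => by rw [← hxC, ← hxC, hij]) hx_fin
  have hy_fin : (Set.range (digitRemainder g (betaDigit b))).Finite := by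
    refine Function.FactorsThrough.finite_range (fun i j hij => ?_) hx_fin
    rw [← sub_eq_zero]
    have := aeval_eq_zero_of_aeval_minpoly_eq_zero hg
      (p := digitRemainder X (betaDigit b) i - digitRemainder X (betaDigit b) j)
      (by simpa [map_digitRemainder, sub_eq_zero] using hij)
    simpa [map_digitRemainder] using this
  have hF := tsum_digitRemainder_eq_zero hgb (one_lt_goldenRatio.trans_le hφ)
    hxC_fin.isBounded hy_fin.isBounded
  have hg_inv : ‖g⁻¹‖ ≤ φ⁻¹ := by
    rw [norm_inv]
    exact inv_anti₀ goldenRatio_pos hφ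
  have := re_tsum_ofReal_mul_pow_pos rfl hx1 hx_mem hg_inv
  simp only [hxC, hF, Complex.zero_re, lt_self_iff_false] at this

theorem pow_not_parry_of_large_conjugate_general (β : ℝ) (hβ : IsPerron β)
    (γ : ℂ) (hroot : Polynomial.aeval γ (minpoly ℚ β) = 0) (hne : γ ≠ (β : ℂ))
    (hγ : 1 < ‖γ‖) :
    ∀ k : ℕ, Real.log ((1 + Real.sqrt 5) / 2) / Real.log (‖γ‖) ≤ (k : ℝ) →
      ¬ IsParry (β ^ k) := by
  intro k hk hparry
  have hφ : φ ≤ ‖γ ^ k‖ := by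
    rw [norm_pow, ← Real.log_le_log_iff goldenRatio_pos (by positivity), Real.log_pow]
    exact (div_le_iff₀ (Real.log_pos hγ)).mp hk
  have hk0 : k ≠ 0 := by
    rintro rfl
    exact (one_lt_goldenRatio.trans_le (by simpa using hφ)).false
  have hne_pow : γ ^ k ≠ ((β ^ k : ℝ) : ℂ) := by
    refine ne_of_apply_ne norm (ne_of_lt ?_)
    rw [norm_pow, Complex.norm_real, Real.norm_of_nonneg (pow_pos (one_pos.trans hβ.1) k).le]
    exact pow_lt_pow_left₀ (hβ.2.2 γ hroot hne) (norm_nonneg γ) hk0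
  exact (hparry.norm_lt_goldenRatio (aeval_pow_minpoly_pow hroot k) hne_pow).not_ge hφ

/-- If `β` is Perron, neither Pisot nor Salem, and `γ ≠ β` is a conjugate of `β` with
`|γ| > 1`, then `β ^ k` is not Parry for every `k ≥ log θ₀ / log |γ|`. -/
theorem pow_not_parry_of_large_conjugate (β : ℝ) (hβ : IsPerron β)
    (hp : ¬ IsPisot β) (hs : ¬ IsSalem β)
    (γ : ℂ) (hroot : Polynomial.aeval γ (minpoly ℚ β) = 0) (hne : γ ≠ (β : ℂ))
    (hγ : 1 < ‖γ‖) :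
    ∀ k : ℕ, Real.log ((1 + Real.sqrt 5) / 2) / Real.log (‖γ‖) ≤ (k : ℝ) →
      ¬ IsParry (β ^ k) :=
  pow_not_parry_of_large_conjugate_general β hβ γ hroot hne hγ
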